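/- If the pair (X₁,Y₁) is independent of the pair (X₂,Y₂), then G_NNI(X₁,X₂; Y₁,Y₂) ≥ G_NNI(X₁;Y₁) + G_NNI(X₂;Y₂), and the analogous superadditivity inequalities hold for G_PNI and for G_PPI. -/

import Mathlib

/-!
Given auxiliaries `U₁` for `(X₁, Y₁)` and `U₂` for `(X₂, Y₂)`, draw them independently given the
sources. Then `U = (U₁, U₂)` is an auxiliary for `((X₁, X₂), (Y₁, Y₂))`, and the joint law of
`(X, Y, U)` is the product of the laws of `(X₁, Y₁, U₁)` and `(X₂, Y₂, U₂)`. Entropies of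
variables that split along such a product add, so the gain `I(X;Y|U) - I(X;Y)` of `U` is the sum
of the gains of `U₁` and `U₂`, and independence of `Uᵢ` from `Xᵢ` (or `Yᵢ`) passes to the pair.
Superadditivity of the suprema follows: the constant auxiliary makes every set of gains nonempty,
and `I(X;Y|U) ≤ H(X|U) ≤ |X| / log 2` bounds them above.
-/

open scoped BigOperators Pointwise Classical

noncomputable section

namespace GW

/-- A probability mass function on a finite type. -/
def IsPMF {α : Type} [Fintype α] (p : α → ℝ) : Prop :=
  (∀ a, 0 ≤ p a) ∧ ∑ a, p a = 1

/-- Distribution (pmf) of the random variable `f` under the pmf `p`. -/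
def dist {α β : Type} [Fintype α] (p : α → ℝ) (f : α → β) : β → ℝ :=
  fun b => ∑ a, if f a = b then p a else 0

/-- Shannon entropy (base 2) of the random variable `f` under the pmf `p`. -/
def H {α β : Type} [Fintype α] [Fintype β] (p : α → ℝ) (f : α → β) : ℝ :=
  ∑ b, -(dist p f b * Real.logb 2 (dist p f b))

/-- Mutual information `I(f; g)` under `p`. -/
def I2 {α β γ : Type} [Fintype α] [Fintype β] [Fintype γ]
    (p : α → ℝ) (f : α → β) (g : α → γ) : ℝ :=
  H p f + H p g - H p (fun a => (f a, g a))

/-- Conditional entropy `H(f | g)` under `p`. -/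
def Hc {α β γ : Type} [Fintype α] [Fintype β] [Fintype γ]
    (p : α → ℝ) (f : α → β) (g : α → γ) : ℝ :=
  H p (fun a => (f a, g a)) - H p g

/-- Conditional mutual information `I(f; g | h)` under `p`. -/
def Ic {α β γ δ : Type} [Fintype α] [Fintype β] [Fintype γ] [Fintype δ]
    (p : α → ℝ) (f : α → β) (g : α → γ) (h : α → δ) : ℝ :=
  Hc p f h + Hc p g h - Hc p (fun a => (f a, g a)) h

/-- Independence of the random variables `f` and `g` under `p`. -/
def Indep {α β γ : Type} [Fintype α] (p : α → ℝ) (f : α → β) (g : α → γ) : Prop :=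
  ∀ b c, dist p (fun a => (f a, g a)) (b, c) = dist p f b * dist p g c

/-- `q` is a joint pmf on `X × Y × U` whose `(X,Y)`-marginal is `p`; i.e. `U` is an
auxiliary random variable defined jointly with `(X,Y)` via a conditional pmf `p_{U|XY}`. -/
def IsAux {X Y U : Type} [Fintype X] [Fintype Y] [Fintype U]
    (p : X × Y → ℝ) (q : X × Y × U → ℝ) : Prop :=
  IsPMF q ∧ ∀ x y, (∑ u, q (x, y, u)) = p (x, y)

/-- Coordinate map onto `X`. -/
def cX {X Y U : Type} : X × Y × U → X := fun a => a.1
/-- Coordinate map onto `Y`. -/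
def cY {X Y U : Type} : X × Y × U → Y := fun a => a.2.1
/-- Coordinate map onto `U`. -/
def cU {X Y U : Type} : X × Y × U → U := fun a => a.2.2
/-- Coordinate map onto `X × Y`. -/
def cXY {X Y U : Type} : X × Y × U → X × Y := fun a => (a.1, a.2.1)

/-- The mutual information region `𝓘_{XY}`. -/
def MIRegion {X Y : Type} [Fintype X] [Fintype Y] (p : X × Y → ℝ) : Set (ℝ × ℝ × ℝ) :=
  { v | ∃ (U : Type) (_ : Fintype U) (q : X × Y × U → ℝ), IsAux p q ∧
      v = (I2 q cX cU, I2 q cY cU, I2 q cXY cU) }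

/-- The outer region `𝓘ᵒ_{XY}`. -/
def OuterRegion {X Y : Type} [Fintype X] [Fintype Y] (p : X × Y → ℝ) : Set (ℝ × ℝ × ℝ) :=
  { v | 0 ≤ v.1 ∧ 0 ≤ v.2.1 ∧ v.1 + v.2.1 - v.2.2 ≤ I2 p Prod.fst Prod.snd ∧
        0 ≤ v.2.2 - v.2.1 ∧ v.2.2 - v.2.1 ≤ Hc p Prod.fst Prod.snd ∧
        0 ≤ v.2.2 - v.1 ∧ v.2.2 - v.1 ≤ Hc p Prod.snd Prod.fst }

/-- Maximal interaction information `G_NNI(X; Y)`. -/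
def GNNI {X Y : Type} [Fintype X] [Fintype Y] (p : X × Y → ℝ) : ℝ :=
  sSup { r | ∃ (U : Type) (_ : Fintype U) (q : X × Y × U → ℝ), IsAux p q ∧
      r = Ic q cX cY cU - I2 p Prod.fst Prod.snd }

/-- Asymmetric private interaction information `G_PNI(X → Y)`. -/
def GPNI {X Y : Type} [Fintype X] [Fintype Y] (p : X × Y → ℝ) : ℝ :=
  sSup { r | ∃ (U : Type) (_ : Fintype U) (q : X × Y × U → ℝ), IsAux p q ∧
      Indep q cU cX ∧ r = Ic q cX cY cU - I2 p Prod.fst Prod.snd }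

/-- Symmetric private interaction information `G_PPI(X; Y)`. -/
def GPPI {X Y : Type} [Fintype X] [Fintype Y] (p : X × Y → ℝ) : ℝ :=
  sSup { r | ∃ (U : Type) (_ : Fintype U) (q : X × Y × U → ℝ), IsAux p q ∧
      Indep q cU cX ∧ Indep q cU cY ∧ r = Ic q cX cY cU - I2 p Prod.fst Prod.snd }

open Real

lemma dist_nonneg {α β : Type} [Fintype α] {p : α → ℝ} (hp : ∀ a, 0 ≤ p a) (f : α → β)
    (b : β) : 0 ≤ dist p f b :=
  Finset.sum_nonneg fun a _ => by split_ifs <;> simp [hp a]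

lemma indep_of_subsingleton {α β γ : Type} [Fintype α] [Subsingleton β] {p : α → ℝ}
    (hp : ∑ a, p a = 1) (f : α → β) (g : α → γ) : Indep p f g := by
  intro b c
  have hf : dist p f b = 1 := by simp [dist, Subsingleton.elim _ b, hp]
  have hfg : dist p (fun a => (f a, g a)) (b, c) = dist p g c := by
    simp [dist, Subsingleton.elim _ b]
  rw [hf, hfg, one_mul]

section Entropy

variable {α β γ : Type} [Fintype α] [Fintype β]

lemma sum_dist (p : α → ℝ) (f : α → β) : ∑ b, dist p f b = ∑ a, p a := by
  unfold dist
  rw [Finset.sum_comm]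
  simp

lemma dist_comp (p : α → ℝ) (f : α → β) (φ : β → γ) (c : γ) :
    dist p (fun a => φ (f a)) c = ∑ b, if φ b = c then dist p f b else 0 := by
  simp only [dist]
  rw [← Finset.sum_fiberwise Finset.univ f]
  refine Finset.sum_congr rfl fun b _ => ?_
  rw [Finset.sum_filter]
  split_ifs
  · exact Finset.sum_congr rfl fun a _ => by split_ifs <;> simp_all
  · exact Finset.sum_eq_zero fun a _ => by split_ifs <;> simp_all

lemma sum_dist_pair [Fintype γ] (p : α → ℝ) (f : α → β) (g : α → γ) (c : γ) :
    ∑ b, dist p (fun a => (f a, g a)) (b, c) = dist p g c := by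
  rw [dist_comp p (fun a => (f a, g a)) Prod.snd, Fintype.sum_prod_type]
  simp

lemma H_eq_sum_negMulLog (p : α → ℝ) (f : α → β) :
    H p f = (∑ b, negMulLog (dist p f b)) / log 2 := by
  simp only [H, logb, negMulLog, Finset.sum_div]
  exact Finset.sum_congr rfl fun b _ => by ring

lemma negMulLog_sum_le {ι : Type} (s : Finset ι) {w : ι → ℝ} (hw : ∀ i ∈ s, 0 ≤ w i) :
    negMulLog (∑ i ∈ s, w i) ≤ ∑ i ∈ s, negMulLog (w i) := by
  rw [negMulLog, neg_mul, Finset.sum_mul, ← Finset.sum_neg_distrib]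
  refine Finset.sum_le_sum fun i hi => ?_
  rcases (hw i hi).eq_or_lt with h | h
  · simp [← h]
  · have := log_le_log h (Finset.single_le_sum hw hi)
    rw [negMulLog]
    nlinarith

lemma H_comp_le [Fintype γ] {p : α → ℝ} (hp : ∀ a, 0 ≤ p a) (f : α → β) (φ : β → γ) :
    H p (fun a => φ (f a)) ≤ H p f := by
  simp only [H_eq_sum_negMulLog, dist_comp p f φ]
  gcongr
  calc ∑ c, negMulLog (∑ b, if φ b = c then dist p f b else 0)
      ≤ ∑ c, ∑ b, negMulLog (if φ b = c then dist p f b else 0) :=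
        Finset.sum_le_sum fun c _ =>
          negMulLog_sum_le _ fun b _ => by split_ifs <;> simp [dist_nonneg hp]
    _ = ∑ b, negMulLog (dist p f b) := by
        rw [Finset.sum_comm]
        simp [apply_ite negMulLog]

lemma negMulLog_add_mul_log_le {d e : ℝ} (hd : 0 ≤ d) (hde : d ≤ e) :
    negMulLog d + d * log e ≤ e := by
  rcases hd.eq_or_lt with rfl | hd
  · simpa using hde
  · have h := log_le_sub_one_of_pos (div_pos (hd.trans_le hde) hd)
    rw [log_div (hd.trans_le hde).ne' hd.ne'] at h
    have : d * (log e - log d) ≤ e - d := by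
      calc d * (log e - log d) ≤ d * (e / d - 1) := mul_le_mul_of_nonneg_left h hd.le
        _ = e - d := by field_simp
    rw [negMulLog]
    nlinarith

lemma Hc_le_card [Fintype γ] {p : α → ℝ} (hp : IsPMF p) (f : α → β) (g : α → γ) :
    Hc p f g ≤ Fintype.card β / log 2 := by
  set d := dist p (fun a => (f a, g a))
  have hdg : ∀ b c, d (b, c) ≤ dist p g c := fun b c => by
    rw [← sum_dist_pair p f g c]
    exact Finset.single_le_sum (f := fun b => d (b, c))
      (fun b _ => dist_nonneg hp.1 _ _) (Finset.mem_univ b)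
  have hg : ∑ c, negMulLog (dist p g c) = -∑ b, ∑ c, d (b, c) * log (dist p g c) := by
    rw [Finset.sum_comm, ← Finset.sum_neg_distrib]
    refine Finset.sum_congr rfl fun c _ => ?_
    rw [← Finset.sum_mul, sum_dist_pair, negMulLog, neg_mul]
  have key : ∑ b, ∑ c, negMulLog (d (b, c)) ≤ ∑ c, negMulLog (dist p g c) + Fintype.card β := by
    calc ∑ b, ∑ c, negMulLog (d (b, c))
        ≤ ∑ b, ∑ c, (dist p g c - d (b, c) * log (dist p g c)) :=
          Finset.sum_le_sum fun b _ => Finset.sum_le_sum fun c _ => le_sub_iff_add_le.2 <|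
            negMulLog_add_mul_log_le (dist_nonneg hp.1 _ _) (hdg b c)
      _ = ∑ c, negMulLog (dist p g c) + Fintype.card β := by
          simp only [Finset.sum_sub_distrib, hg, Finset.sum_const, Finset.card_univ, sum_dist,
            hp.2, nsmul_eq_mul, mul_one]
          ring
  rw [Hc, H_eq_sum_negMulLog, H_eq_sum_negMulLog, Fintype.sum_prod_type, ← sub_div]
  exact div_le_div_of_nonneg_right (by linarith) (log_pos one_lt_two).le

lemma Ic_le_card {δ : Type} [Fintype γ] [Fintype δ] {p : α → ℝ} (hp : IsPMF p)
    (f : α → β) (g : α → γ) (h : α → δ) : Ic p f g h ≤ Fintype.card β / log 2 := by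
  have hfh := Hc_le_card hp f h
  have hgh : H p (fun a => (g a, h a)) ≤ H p (fun a => ((f a, g a), h a)) :=
    H_comp_le hp.1 (fun a => ((f a, g a), h a)) fun x => (x.1.2, x.2)
  simp only [Ic, Hc] at hfh ⊢
  linarith

end Entropy

section Product

variable {α₁ α₂ α β₁ β₂ β γ₁ γ₂ γ δ₁ δ₂ δ : Type}

def SplitsAlong (e : α₁ × α₂ ≃ α) (f : α → β) (f₁ : α₁ → β₁) (f₂ : α₂ → β₂) : Prop :=
  ∃ σ : β₁ × β₂ ≃ β, ∀ a₁ a₂, f (e (a₁, a₂)) = σ (f₁ a₁, f₂ a₂)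

lemma SplitsAlong.pair {e : α₁ × α₂ ≃ α} {f : α → β} {f₁ : α₁ → β₁} {f₂ : α₂ → β₂}
    {g : α → γ} {g₁ : α₁ → γ₁} {g₂ : α₂ → γ₂}
    (hf : SplitsAlong e f f₁ f₂) (hg : SplitsAlong e g g₁ g₂) :
    SplitsAlong e (fun a => (f a, g a)) (fun a => (f₁ a, g₁ a)) (fun a => (f₂ a, g₂ a)) := by
  obtain ⟨σ, hσ⟩ := hf
  obtain ⟨τ, hτ⟩ := hg
  exact ⟨(Equiv.prodProdProdComm _ _ _ _).trans (σ.prodCongr τ), fun a₁ a₂ => by simp [hσ, hτ]⟩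

variable [Fintype α₁] [Fintype α₂] [Fintype α]
  {e : α₁ × α₂ ≃ α} {q₁ : α₁ → ℝ} {q₂ : α₂ → ℝ} {q : α → ℝ}

lemma isPMF_of_mul (hq : ∀ a₁ a₂, q (e (a₁, a₂)) = q₁ a₁ * q₂ a₂)
    (h₁ : IsPMF q₁) (h₂ : IsPMF q₂) : IsPMF q := by
  refine ⟨fun a => ?_, ?_⟩
  · obtain ⟨⟨a₁, a₂⟩, rfl⟩ := e.surjective a
    rw [hq]
    exact mul_nonneg (h₁.1 a₁) (h₂.1 a₂)
  · rw [← e.sum_comp, Fintype.sum_prod_type]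
    simp only [hq]
    rw [← Finset.sum_mul_sum, h₁.2, h₂.2, one_mul]

lemma dist_eq_mul (hq : ∀ a₁ a₂, q (e (a₁, a₂)) = q₁ a₁ * q₂ a₂)
    {f : α → β} {f₁ : α₁ → β₁} {f₂ : α₂ → β₂} (σ : β₁ × β₂ ≃ β)
    (hf : ∀ a₁ a₂, f (e (a₁, a₂)) = σ (f₁ a₁, f₂ a₂)) (b₁ : β₁) (b₂ : β₂) :
    dist q f (σ (b₁, b₂)) = dist q₁ f₁ b₁ * dist q₂ f₂ b₂ := by
  unfold dist
  rw [← e.sum_comp, Fintype.sum_prod_type, Finset.sum_mul_sum]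
  refine Finset.sum_congr rfl fun a₁ _ => Finset.sum_congr rfl fun a₂ _ => ?_
  simp only [hf, hq, σ.apply_eq_iff_eq, Prod.mk.injEq, ite_zero_mul_ite_zero]

lemma indep_of_splitsAlong (hq : ∀ a₁ a₂, q (e (a₁, a₂)) = q₁ a₁ * q₂ a₂)
    {f : α → β} {f₁ : α₁ → β₁} {f₂ : α₂ → β₂} {g : α → γ} {g₁ : α₁ → γ₁} {g₂ : α₂ → γ₂}
    (hf : SplitsAlong e f f₁ f₂) (hg : SplitsAlong e g g₁ g₂)
    (h₁ : Indep q₁ f₁ g₁) (h₂ : Indep q₂ f₂ g₂) : Indep q f g := by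
  obtain ⟨σ, hσ⟩ := hf
  obtain ⟨τ, hτ⟩ := hg
  intro b c
  obtain ⟨⟨b₁, b₂⟩, rfl⟩ := σ.surjective b
  obtain ⟨⟨c₁, c₂⟩, rfl⟩ := τ.surjective c
  have hfg := dist_eq_mul hq ((Equiv.prodProdProdComm _ _ _ _).trans (σ.prodCongr τ))
    (f := fun a => (f a, g a)) (f₁ := fun a => (f₁ a, g₁ a)) (f₂ := fun a => (f₂ a, g₂ a))
    (fun a₁ a₂ => by simp [hσ, hτ]) (b₁, c₁) (b₂, c₂)
  simp only [Equiv.trans_apply, Equiv.prodProdProdComm_apply, Equiv.prodCongr_apply,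
    Prod.map_apply] at hfg
  rw [hfg, h₁, h₂, dist_eq_mul hq σ hσ, dist_eq_mul hq τ hτ]
  ring

variable [Fintype β₁] [Fintype β₂] [Fintype β]

lemma H_eq_add (hq : ∀ a₁ a₂, q (e (a₁, a₂)) = q₁ a₁ * q₂ a₂)
    (hq₁ : ∑ a, q₁ a = 1) (hq₂ : ∑ a, q₂ a = 1) {f : α → β} {f₁ : α₁ → β₁} {f₂ : α₂ → β₂}
    (hf : SplitsAlong e f f₁ f₂) : H q f = H q₁ f₁ + H q₂ f₂ := by
  obtain ⟨σ, hσ⟩ := hf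
  simp only [H_eq_sum_negMulLog, ← add_div]
  rw [← σ.sum_comp, Fintype.sum_prod_type]
  simp only [dist_eq_mul hq σ hσ, negMulLog_mul, Finset.sum_add_distrib, ← Finset.mul_sum,
    ← Finset.sum_mul, sum_dist, hq₁, hq₂, one_mul]

variable [Fintype γ₁] [Fintype γ₂] [Fintype γ] [Fintype δ₁] [Fintype δ₂] [Fintype δ]

lemma I2_eq_add (hq : ∀ a₁ a₂, q (e (a₁, a₂)) = q₁ a₁ * q₂ a₂)
    (hq₁ : ∑ a, q₁ a = 1) (hq₂ : ∑ a, q₂ a = 1)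
    {f : α → β} {f₁ : α₁ → β₁} {f₂ : α₂ → β₂} {g : α → γ} {g₁ : α₁ → γ₁} {g₂ : α₂ → γ₂}
    (hf : SplitsAlong e f f₁ f₂) (hg : SplitsAlong e g g₁ g₂) :
    I2 q f g = I2 q₁ f₁ g₁ + I2 q₂ f₂ g₂ := by
  simp only [I2, H_eq_add hq hq₁ hq₂ hf, H_eq_add hq hq₁ hq₂ hg,
    H_eq_add hq hq₁ hq₂ (hf.pair hg)]
  ring

lemma Ic_eq_add (hq : ∀ a₁ a₂, q (e (a₁, a₂)) = q₁ a₁ * q₂ a₂)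
    (hq₁ : ∑ a, q₁ a = 1) (hq₂ : ∑ a, q₂ a = 1)
    {f : α → β} {f₁ : α₁ → β₁} {f₂ : α₂ → β₂} {g : α → γ} {g₁ : α₁ → γ₁} {g₂ : α₂ → γ₂}
    {h : α → δ} {h₁ : α₁ → δ₁} {h₂ : α₂ → δ₂}
    (hf : SplitsAlong e f f₁ f₂) (hg : SplitsAlong e g g₁ g₂) (hh : SplitsAlong e h h₁ h₂) :
    Ic q f g h = Ic q₁ f₁ g₁ h₁ + Ic q₂ f₂ g₂ h₂ := by
  simp only [Ic, Hc, H_eq_add hq hq₁ hq₂ hh, H_eq_add hq hq₁ hq₂ (hf.pair hh),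
    H_eq_add hq hq₁ hq₂ (hg.pair hh), H_eq_add hq hq₁ hq₂ ((hf.pair hg).pair hh)]
  ring

end Product

section Auxiliary

variable {X Y X₁ Y₁ U₁ X₂ Y₂ U₂ : Type}

def pmfProd (p₁ : X₁ × Y₁ → ℝ) (p₂ : X₂ × Y₂ → ℝ) : (X₁ × X₂) × (Y₁ × Y₂) → ℝ :=
  fun a => p₁ (a.1.1, a.2.1) * p₂ (a.1.2, a.2.2)

def auxProd (q₁ : X₁ × Y₁ × U₁ → ℝ) (q₂ : X₂ × Y₂ × U₂ → ℝ) :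
    (X₁ × X₂) × (Y₁ × Y₂) × (U₁ × U₂) → ℝ :=
  fun a => q₁ (a.1.1, a.2.1.1, a.2.2.1) * q₂ (a.1.2, a.2.1.2, a.2.2.2)

def tripleProdTripleComm (X₁ Y₁ U₁ X₂ Y₂ U₂ : Type) :
    (X₁ × Y₁ × U₁) × (X₂ × Y₂ × U₂) ≃ (X₁ × X₂) × (Y₁ × Y₂) × (U₁ × U₂) :=
  (Equiv.prodProdProdComm _ _ _ _).trans
    ((Equiv.refl _).prodCongr (Equiv.prodProdProdComm _ _ _ _))

lemma splitsAlong_cX :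
    SplitsAlong (tripleProdTripleComm X₁ Y₁ U₁ X₂ Y₂ U₂) cX cX cX :=
  ⟨Equiv.refl _, fun _ _ => rfl⟩

lemma splitsAlong_cY :
    SplitsAlong (tripleProdTripleComm X₁ Y₁ U₁ X₂ Y₂ U₂) cY cY cY :=
  ⟨Equiv.refl _, fun _ _ => rfl⟩

lemma splitsAlong_cU :
    SplitsAlong (tripleProdTripleComm X₁ Y₁ U₁ X₂ Y₂ U₂) cU cU cU :=
  ⟨Equiv.refl _, fun _ _ => rfl⟩

variable [Fintype X] [Fintype Y]
  [Fintype X₁] [Fintype Y₁] [Fintype U₁] [Fintype X₂] [Fintype Y₂] [Fintype U₂]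

lemma isAux_unit {p : X × Y → ℝ} (hp : IsPMF p) :
    IsAux p (fun a : X × Y × Unit => p (a.1, a.2.1)) := by
  refine ⟨⟨fun a => hp.1 _, ?_⟩, fun x y => by simp⟩
  simpa [Fintype.sum_prod_type] using hp.2

lemma bddAbove_gains (p : X × Y → ℝ) :
    BddAbove {r | ∃ (U : Type) (_ : Fintype U) (q : X × Y × U → ℝ), IsAux p q ∧
      r = Ic q cX cY cU - I2 p Prod.fst Prod.snd} := by
  refine ⟨Fintype.card X / log 2 - I2 p Prod.fst Prod.snd, ?_⟩
  rintro _ ⟨U, _, q, hq, rfl⟩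
  exact sub_le_sub_right (Ic_le_card hq.1 _ _ _) _

variable {p₁ : X₁ × Y₁ → ℝ} {p₂ : X₂ × Y₂ → ℝ} {q₁ : X₁ × Y₁ × U₁ → ℝ} {q₂ : X₂ × Y₂ × U₂ → ℝ}

lemma isAux_auxProd (h₁ : IsAux p₁ q₁) (h₂ : IsAux p₂ q₂) :
    IsAux (pmfProd p₁ p₂) (auxProd q₁ q₂) := by
  refine ⟨isPMF_of_mul (e := tripleProdTripleComm _ _ _ _ _ _) (fun _ _ => rfl) h₁.1 h₂.1,
    fun x y => ?_⟩
  rw [Fintype.sum_prod_type]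
  simp only [auxProd]
  rw [← Finset.sum_mul_sum, h₁.2, h₂.2, pmfProd]

lemma gain_auxProd (hp₁ : IsPMF p₁) (hp₂ : IsPMF p₂) (h₁ : IsAux p₁ q₁) (h₂ : IsAux p₂ q₂) :
    Ic (auxProd q₁ q₂) cX cY cU - I2 (pmfProd p₁ p₂) Prod.fst Prod.snd =
      (Ic q₁ cX cY cU - I2 p₁ Prod.fst Prod.snd) + (Ic q₂ cX cY cU - I2 p₂ Prod.fst Prod.snd) := by
  have hfst : SplitsAlong (Equiv.prodProdProdComm X₁ Y₁ X₂ Y₂) Prod.fst Prod.fst Prod.fst :=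
    ⟨Equiv.refl _, fun _ _ => rfl⟩
  have hsnd : SplitsAlong (Equiv.prodProdProdComm X₁ Y₁ X₂ Y₂) Prod.snd Prod.snd Prod.snd :=
    ⟨Equiv.refl _, fun _ _ => rfl⟩
  rw [Ic_eq_add (fun _ _ => rfl) h₁.1.2 h₂.1.2 splitsAlong_cX splitsAlong_cY splitsAlong_cU,
    I2_eq_add (fun _ _ => rfl) hp₁.2 hp₂.2 hfst hsnd]
  ring

end Auxiliary

lemma csSup_add_csSup_le {M : Type*} [ConditionallyCompleteLattice M] [AddCommGroup M]
    [IsOrderedAddMonoid M] {S₁ S₂ S : Set M} (h₁ : S₁.Nonempty) (h₂ : S₂.Nonempty)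
    (hS : BddAbove S) (h : ∀ r₁ ∈ S₁, ∀ r₂ ∈ S₂, r₁ + r₂ ∈ S) :
    sSup S₁ + sSup S₂ ≤ sSup S := by
  rw [← le_sub_iff_add_le']
  refine csSup_le h₂ fun r₂ hr₂ => le_sub_comm.1 (csSup_le h₁ fun r₁ hr₁ => ?_)
  exact le_sub_iff_add_le.2 (le_csSup hS (h r₁ hr₁ r₂ hr₂))

section Superadditivity

variable {X₁ Y₁ X₂ Y₂ : Type} [Fintype X₁] [Fintype Y₁] [Fintype X₂] [Fintype Y₂]
  {p₁ : X₁ × Y₁ → ℝ} {p₂ : X₂ × Y₂ → ℝ}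

lemma GNNI_add_le (hp₁ : IsPMF p₁) (hp₂ : IsPMF p₂) :
    GNNI p₁ + GNNI p₂ ≤ GNNI (pmfProd p₁ p₂) := by
  refine csSup_add_csSup_le ⟨_, Unit, _, _, isAux_unit hp₁, rfl⟩
    ⟨_, Unit, _, _, isAux_unit hp₂, rfl⟩ (bddAbove_gains _) ?_
  rintro _ ⟨U₁, _, q₁, h₁, rfl⟩ _ ⟨U₂, _, q₂, h₂, rfl⟩
  exact ⟨U₁ × U₂, inferInstance, auxProd q₁ q₂, isAux_auxProd h₁ h₂,
    (gain_auxProd hp₁ hp₂ h₁ h₂).symm⟩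

lemma GPNI_add_le (hp₁ : IsPMF p₁) (hp₂ : IsPMF p₂) :
    GPNI p₁ + GPNI p₂ ≤ GPNI (pmfProd p₁ p₂) := by
  refine csSup_add_csSup_le
    ⟨_, Unit, _, _, isAux_unit hp₁, indep_of_subsingleton (isAux_unit hp₁).1.2 _ _, rfl⟩
    ⟨_, Unit, _, _, isAux_unit hp₂, indep_of_subsingleton (isAux_unit hp₂).1.2 _ _, rfl⟩
    ((bddAbove_gains (pmfProd p₁ p₂)).mono ?_) ?_
  · rintro r ⟨U, _, q, h, -, hr⟩
    exact ⟨U, _, q, h, hr⟩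
  rintro _ ⟨U₁, _, q₁, h₁, hX₁, rfl⟩ _ ⟨U₂, _, q₂, h₂, hX₂, rfl⟩
  exact ⟨U₁ × U₂, inferInstance, auxProd q₁ q₂, isAux_auxProd h₁ h₂,
    indep_of_splitsAlong (fun _ _ => rfl) splitsAlong_cU splitsAlong_cX hX₁ hX₂,
    (gain_auxProd hp₁ hp₂ h₁ h₂).symm⟩

lemma GPPI_add_le (hp₁ : IsPMF p₁) (hp₂ : IsPMF p₂) :
    GPPI p₁ + GPPI p₂ ≤ GPPI (pmfProd p₁ p₂) := by
  refine csSup_add_csSup_le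
    ⟨_, Unit, _, _, isAux_unit hp₁, indep_of_subsingleton (isAux_unit hp₁).1.2 _ _,
      indep_of_subsingleton (isAux_unit hp₁).1.2 _ _, rfl⟩
    ⟨_, Unit, _, _, isAux_unit hp₂, indep_of_subsingleton (isAux_unit hp₂).1.2 _ _,
      indep_of_subsingleton (isAux_unit hp₂).1.2 _ _, rfl⟩
    ((bddAbove_gains (pmfProd p₁ p₂)).mono ?_) ?_
  · rintro r ⟨U, _, q, h, -, -, hr⟩
    exact ⟨U, _, q, h, hr⟩
  rintro _ ⟨U₁, _, q₁, h₁, hX₁, hY₁, rfl⟩ _ ⟨U₂, _, q₂, h₂, hX₂, hY₂, rfl⟩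
  exact ⟨U₁ × U₂, inferInstance, auxProd q₁ q₂, isAux_auxProd h₁ h₂,
    indep_of_splitsAlong (fun _ _ => rfl) splitsAlong_cU splitsAlong_cX hX₁ hX₂,
    indep_of_splitsAlong (fun _ _ => rfl) splitsAlong_cU splitsAlong_cY hY₁ hY₂,
    (gain_auxProd hp₁ hp₂ h₁ h₂).symm⟩

end Superadditivity

/-- superadditivity of `G_NNI`, `G_PNI` and `G_PPI` for independent pairs
(the joint pmf of `((X₁,X₂),(Y₁,Y₂))` is the product of the pmfs of `(X₁,Y₁)`,`(X₂,Y₂)`). -/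
theorem stmt17 {X₁ Y₁ X₂ Y₂ : Type} [Fintype X₁] [Fintype Y₁] [Fintype X₂] [Fintype Y₂]
    (p₁ : X₁ × Y₁ → ℝ) (p₂ : X₂ × Y₂ → ℝ) (h₁ : IsPMF p₁) (h₂ : IsPMF p₂) :
    GNNI p₁ + GNNI p₂ ≤
        GNNI (fun a : (X₁ × X₂) × (Y₁ × Y₂) => p₁ (a.1.1, a.2.1) * p₂ (a.1.2, a.2.2)) ∧
    GPNI p₁ + GPNI p₂ ≤
        GPNI (fun a : (X₁ × X₂) × (Y₁ × Y₂) => p₁ (a.1.1, a.2.1) * p₂ (a.1.2, a.2.2)) ∧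
    GPPI p₁ + GPPI p₂ ≤
        GPPI (fun a : (X₁ × X₂) × (Y₁ × Y₂) => p₁ (a.1.1, a.2.1) * p₂ (a.1.2, a.2.2)) :=
  ⟨GNNI_add_le h₁ h₂, GPNI_add_le h₁ h₂, GPPI_add_le h₁ h₂⟩

end GW
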